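/- arXiv:1401.3822 — 2 statements merged into one kernel-verified Lean document; each statement's English description precedes it below -/
import Mathlib

section
/- Let n ≥ 1 be an integer, m > 0, H > 0 and β > 0. Let a(t) = exp(H t^β) for t > 0 and define the curved mass c(t) = m² + (n/2 − n²/4)(ȧ(t)/a(t))² − (n/2)(ä(t)/a(t)), so that c(t) = m² − (1/4) β H n t^{β−2} ( β H n t^{β} + 2β − 2 ). Then the following are equivalent: (i) there exists t₀ > 0 such that c(t) > 0 and ċ(t) ≤ 0 for all t ≥ t₀; (ii) β = 1 and H < 2m/n. -/
/-!
Writing `a = exp ∘ f` with `f t = H t^β`, one has `ȧ/a = f'` and `ä/a = f'' + f'²`, so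
`c = m² - (n f'/2)² - (n/2) f'' = m² - A t^(2β-2) - B t^(β-2)` with `A = (nHβ/2)² > 0`
and `B = (n/2) H β (β-1)`. For `β > 1` both terms pull `c` to `-∞`; for `β < 1` the leading
term of `ċ` is `A (2-2β) t^(2β-3) > 0`, which beats `t^(β-3)`; for `β = 1` the curved mass
is the constant `m² - (nH/2)²`.
-/

open Real Filter Topology

theorem exists_pos_forall_ge_iff_eventually_atTop {P : ℝ → Prop} :
    (∃ t₀, 0 < t₀ ∧ ∀ t, t₀ ≤ t → P t) ↔ ∀ᶠ t in atTop, P t := by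
  rw [eventually_atTop]
  constructor
  · rintro ⟨t₀, -, h⟩
    exact ⟨t₀, h⟩
  · rintro ⟨t₀, h⟩
    exact ⟨max t₀ 1, by positivity, fun t ht => h t (le_of_max_le_left ht)⟩

theorem deriv_deriv_exp_comp {f f' : ℝ → ℝ} {x f'' : ℝ}
    (hf : ∀ᶠ y in 𝓝 x, HasDerivAt f (f' y) y) (hf' : HasDerivAt f' f'' x) :
    deriv (deriv fun y => exp (f y)) x = (f'' + f' x ^ 2) * exp (f x) := by
  have hderiv : deriv (fun y => exp (f y)) =ᶠ[𝓝 x] fun y => exp (f y) * f' y :=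
    hf.mono fun y hy => hy.exp.deriv
  rw [hderiv.deriv_eq, (hf.self_of_nhds.exp.fun_mul hf').deriv]
  ring

theorem curvedMass_exp_comp (n m : ℝ) {f f' : ℝ → ℝ} {x f'' : ℝ}
    (hf : ∀ᶠ y in 𝓝 x, HasDerivAt f (f' y) y) (hf' : HasDerivAt f' f'' x) :
    m ^ 2 + (n / 2 - n ^ 2 / 4) * (deriv (fun y => exp (f y)) x / exp (f x)) ^ 2
        - n / 2 * (deriv (deriv fun y => exp (f y)) x / exp (f x))
      = m ^ 2 - (n * f' x / 2) ^ 2 - n / 2 * f'' := by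
  rw [hf.self_of_nhds.exp.deriv, deriv_deriv_exp_comp hf hf']
  field_simp
  ring

theorem hasDerivAt_const_mul_rpow (C p : ℝ) {t : ℝ} (ht : 0 < t) :
    HasDerivAt (fun s => C * s ^ p) (C * p * t ^ (p - 1)) t := by
  simpa [mul_assoc] using (hasDerivAt_rpow_const (p := p) (Or.inl ht.ne')).const_mul C

theorem curvedMass_exp_const_mul_rpow (n m H β : ℝ) {t : ℝ} (ht : 0 < t) :
    m ^ 2 + (n / 2 - n ^ 2 / 4) * (deriv (fun s => exp (H * s ^ β)) t / exp (H * t ^ β)) ^ 2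
        - n / 2 * (deriv (deriv fun s => exp (H * s ^ β)) t / exp (H * t ^ β))
      = m ^ 2 - (n * H * β / 2) ^ 2 * t ^ (2 * β - 2)
        - n / 2 * H * β * (β - 1) * t ^ (β - 2) := by
  have hf : ∀ᶠ s in 𝓝 t, HasDerivAt (fun s => H * s ^ β) (H * β * s ^ (β - 1)) s :=
    eventually_of_mem (Ioi_mem_nhds ht) fun s hs => hasDerivAt_const_mul_rpow H β hs
  have hf' :
      HasDerivAt (fun s => H * β * s ^ (β - 1)) (H * β * (β - 1) * t ^ (β - 2)) t := by
    convert hasDerivAt_const_mul_rpow (H * β) (β - 1) ht using 3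
    ring
  have hsq : t ^ (2 * β - 2) = (t ^ (β - 1)) ^ 2 := by
    rw [← rpow_mul_natCast ht.le]
    ring_nf
  rw [curvedMass_exp_comp n m hf hf', hsq]
  ring

section ClosedForm

variable {M A B β : ℝ} {c : ℝ → ℝ}

theorem deriv_eq_of_eq_closedForm
    (hc : ∀ t, 0 < t → c t = M - A * t ^ (2 * β - 2) - B * t ^ (β - 2))
    {t : ℝ} (ht : 0 < t) :
    deriv c t = -(A * (2 * β - 2) * t ^ (2 * β - 3)) - B * (β - 2) * t ^ (β - 3) := by
  have h₁ :
      HasDerivAt (fun s => A * s ^ (2 * β - 2)) (A * (2 * β - 2) * t ^ (2 * β - 3)) t := by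
    convert hasDerivAt_const_mul_rpow A (2 * β - 2) ht using 3
    ring
  have h₂ : HasDerivAt (fun s => B * s ^ (β - 2)) (B * (β - 2) * t ^ (β - 3)) t := by
    convert hasDerivAt_const_mul_rpow B (β - 2) ht using 3
    ring
  exact (((h₁.const_sub M).sub h₂).congr_of_eventuallyEq
    (eventually_of_mem (Ioi_mem_nhds ht) hc)).deriv

theorem eventually_closedForm_neg (hA : 0 < A) (hB : 0 ≤ B) (hβ : 1 < β) :
    ∀ᶠ t in atTop, M - A * t ^ (2 * β - 2) - B * t ^ (β - 2) < 0 := by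
  have hlim : Tendsto (fun t : ℝ => t ^ (2 * β - 2)) atTop atTop :=
    tendsto_rpow_atTop (by linarith)
  filter_upwards [hlim.eventually_gt_atTop (M / A), eventually_gt_atTop 0] with t ht ht₀
  have hlead : M < A * t ^ (2 * β - 2) := (div_lt_iff₀' hA).mp ht
  have hrest : 0 ≤ B * t ^ (β - 2) := mul_nonneg hB (rpow_nonneg ht₀.le _)
  linarith

theorem eventually_deriv_closedForm_pos (hA : 0 < A) (hβ₀ : 0 < β) (hβ : β < 1) :
    ∀ᶠ t in atTop,
      0 < -(A * (2 * β - 2) * t ^ (2 * β - 3)) - B * (β - 2) * t ^ (β - 3) := by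
  have hlead : 0 < A * (2 - 2 * β) := mul_pos hA (by linarith)
  filter_upwards [(tendsto_rpow_atTop hβ₀).eventually_gt_atTop
    (B * (β - 2) / (A * (2 - 2 * β))), eventually_gt_atTop 0] with t ht ht₀
  have hsplit : t ^ (2 * β - 3) = t ^ β * t ^ (β - 3) := by
    rw [← rpow_add ht₀]
    ring_nf
  have hfactor : -(A * (2 * β - 2) * (t ^ β * t ^ (β - 3))) - B * (β - 2) * t ^ (β - 3)
      = t ^ (β - 3) * (t ^ β * (A * (2 - 2 * β)) - B * (β - 2)) := by
    ring
  rw [hsplit, hfactor]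
  exact mul_pos (rpow_pos_of_pos ht₀ _) (sub_pos.mpr ((div_lt_iff₀ hlead).mp ht))

end ClosedForm

theorem eventually_curvedMass_pos_and_deriv_nonpos_iff {n m H β : ℝ}
    (hn : 0 < n) (hm : 0 < m) (hH : 0 < H) (hβ : 0 < β) {c : ℝ → ℝ}
    (hc : ∀ t, 0 < t →
      c t = m ^ 2 - (n * H * β / 2) ^ 2 * t ^ (2 * β - 2)
        - n / 2 * H * β * (β - 1) * t ^ (β - 2)) :
    (∀ᶠ t in atTop, 0 < c t ∧ deriv c t ≤ 0) ↔ β = 1 ∧ H < 2 * m / n := by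
  have hA : 0 < (n * H * β / 2) ^ 2 := by positivity
  rcases lt_trichotomy β 1 with hβ1 | rfl | hβ1
  · simp only [hβ1.ne, false_and, iff_false]
    intro h
    have hderiv_pos :=
      eventually_deriv_closedForm_pos (B := n / 2 * H * β * (β - 1)) hA hβ hβ1
    obtain ⟨t, ⟨-, hle⟩, hpos, ht⟩ :=
      (h.and (hderiv_pos.and (eventually_gt_atTop 0))).exists
    rw [deriv_eq_of_eq_closedForm hc ht] at hle
    linarith
  · have hconst :
        ∀ᶠ t in atTop, (0 < c t ∧ deriv c t ≤ 0) ↔ (n * H / 2) ^ 2 < m ^ 2 := by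
      filter_upwards [eventually_gt_atTop 0] with t ht
      rw [hc t ht, deriv_eq_of_eq_closedForm hc ht]
      norm_num
    rw [eventually_congr hconst, eventually_const, sq_lt_sq₀ (by positivity) hm.le,
      lt_div_iff₀ hn, eq_self_iff_true, true_and]
    constructor <;> intro h <;> linarith
  · simp only [hβ1.ne', false_and, iff_false]
    intro h
    have hB : 0 ≤ n / 2 * H * β * (β - 1) := mul_nonneg (by positivity) (by linarith)
    have hc_neg := eventually_closedForm_neg (M := m ^ 2) hA hB hβ1
    obtain ⟨t, ⟨hpos, -⟩, hneg, ht⟩ :=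
      (h.and (hc_neg.and (eventually_gt_atTop 0))).exists
    rw [hc t ht] at hpos
    linarith

/-- for the scale factor `a(t) = exp(H t^β)` with `H > 0`, `β > 0` and
`m > 0`, the curved mass is eventually positive with non-positive derivative if and
only if `β = 1` (de Sitter) and `H < 2m/n` (large mass). -/
theorem stmt_15 (n : ℕ) (hn : 1 ≤ n) (m H β : ℝ) (hm : 0 < m) (hH : 0 < H)
    (hβ : 0 < β)
    (a c : ℝ → ℝ) (ha : a = fun t => Real.exp (H * t ^ β))
    (hc : c = fun t => m ^ 2
      + ((n : ℝ) / 2 - (n : ℝ) ^ 2 / 4) * (deriv a t / a t) ^ 2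
      - ((n : ℝ) / 2) * (deriv (deriv a) t / a t)) :
    (∃ t₀ : ℝ, 0 < t₀ ∧ ∀ t : ℝ, t₀ ≤ t → 0 < c t ∧ deriv c t ≤ 0) ↔
      (β = 1 ∧ H < 2 * m / (n : ℝ)) := by
  have hc_eq : ∀ t, 0 < t → c t = m ^ 2 - (n * H * β / 2) ^ 2 * t ^ (2 * β - 2)
      - n / 2 * H * β * (β - 1) * t ^ (β - 2) := by
    intro t ht
    subst ha hc
    exact curvedMass_exp_const_mul_rpow n m H β ht
  rw [exists_pos_forall_ge_iff_eventually_atTop]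
  exact eventually_curvedMass_pos_and_deriv_nonpos_iff (by exact_mod_cast hn) hm hH hβ hc_eq
end

section
/- Let n ≥ 1 be an integer, m > 0, H ∈ ℝ, β < 0 and 0 < ℓ < 4/n. Let a(t) = t^{ℓ/2} exp(H t^β) for t > 0 and define the curved mass c(t) = m² + (n/2 − n²/4)(ȧ(t)/a(t))² − (n/2)(ä(t)/a(t)). Then there exists t₀ > 0 such that for all t ≥ t₀: ȧ(t) > 0, c(t) > 0, and ċ(t) ≤ 0. -/
/-!
Write `ȧ = a u`. Then `ä = a (u² + u̇)`, so the curved mass is `m² - (n²/4) u² - (n/2) u̇` and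
`ċ = -(n²/2) u u̇ - (n/2) ü`. For `a = t^{ℓ/2} exp(H t^β)` each of `u, u̇, ü` has the form
`t^p (A + B t^β)`, with `t^β → 0` as `β < 0`. Hence `ȧ > 0` and `c → m² > 0` eventually, and
`t³ ċ → (n²/8) ℓ² - (n/2) ℓ = (nℓ/8)(nℓ - 4)`, which is negative because `nℓ < 4`.
-/

noncomputable section

open Filter Real Set Topology

def curvedMass (n m : ℝ) (a : ℝ → ℝ) (t : ℝ) : ℝ :=
  m ^ 2 + (n / 2 - n ^ 2 / 4) * (deriv a t / a t) ^ 2 - (n / 2) * (deriv (deriv a) t / a t)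

section CurvedMass

variable {a u v w : ℝ → ℝ} {s : Set ℝ} {t : ℝ}

theorem deriv_deriv_eq_of_hasDerivAt_mul (hs : IsOpen s)
    (ha : ∀ t ∈ s, HasDerivAt a (a t * u t) t) (hu : ∀ t ∈ s, HasDerivAt u (v t) t)
    (ht : t ∈ s) : deriv (deriv a) t = a t * (u t ^ 2 + v t) := by
  have hda : deriv a =ᶠ[𝓝 t] fun x => a x * u x :=
    eventually_of_mem (hs.mem_nhds ht) fun x hx => (ha x hx).deriv
  rw [hda.deriv_eq]
  exact ((ha t ht).mul (hu t ht)).deriv.trans (by ring)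

theorem curvedMass_eqOn (n m : ℝ) (hs : IsOpen s) (ha : ∀ t ∈ s, HasDerivAt a (a t * u t) t)
    (ha₀ : ∀ t ∈ s, a t ≠ 0) (hu : ∀ t ∈ s, HasDerivAt u (v t) t) :
    EqOn (curvedMass n m a) (fun t => m ^ 2 - n ^ 2 / 4 * u t ^ 2 - n / 2 * v t) s := by
  intro t ht
  rw [curvedMass, (ha t ht).deriv, deriv_deriv_eq_of_hasDerivAt_mul hs ha hu ht,
    mul_div_cancel_left₀ _ (ha₀ t ht), mul_div_cancel_left₀ _ (ha₀ t ht)]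
  ring

theorem deriv_curvedMass (n m : ℝ) (hs : IsOpen s) (ha : ∀ t ∈ s, HasDerivAt a (a t * u t) t)
    (ha₀ : ∀ t ∈ s, a t ≠ 0) (hu : ∀ t ∈ s, HasDerivAt u (v t) t)
    (hv : ∀ t ∈ s, HasDerivAt v (w t) t) (ht : t ∈ s) :
    deriv (curvedMass n m a) t = -(n ^ 2 / 2) * (u t * v t) - n / 2 * w t := by
  have hc : curvedMass n m a =ᶠ[𝓝 t] fun t => m ^ 2 - n ^ 2 / 4 * u t ^ 2 - n / 2 * v t :=
    (curvedMass_eqOn n m hs ha ha₀ hu).eventuallyEq_of_mem (hs.mem_nhds ht)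
  rw [hc.deriv_eq]
  refine (((hasDerivAt_const t _).sub (((hu t ht).pow 2).const_mul _)).sub
    ((hv t ht).const_mul _)).deriv.trans ?_
  simp only [Nat.cast_ofNat]
  ring

end CurvedMass

def powAffine (β p A B t : ℝ) : ℝ :=
  t ^ p * (A + B * t ^ β)

section PowAffine

variable {β p A B t : ℝ}

theorem hasDerivAt_powAffine (ht : 0 < t) :
    HasDerivAt (powAffine β p A B) (powAffine β (p - 1) (p * A) ((p + β) * B) t) t := by
  have hβ := ((hasDerivAt_rpow_const (p := β) (Or.inl ht.ne')).const_mul B).const_add A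
  refine ((hasDerivAt_rpow_const (p := p) (Or.inl ht.ne')).mul hβ).congr_deriv ?_
  have hsplit : t ^ p * t ^ (β - 1) = t ^ (p - 1) * t ^ β := by
    rw [← rpow_add ht, ← rpow_add ht]
    ring_nf
  simp only [powAffine]
  linear_combination B * β * hsplit

theorem tendsto_affine_rpow (hβ : β < 0) :
    Tendsto (fun t : ℝ => A + B * t ^ β) atTop (𝓝 A) := by
  have h : Tendsto (fun t : ℝ => t ^ β) atTop (𝓝 0) := by
    simpa using tendsto_rpow_neg_atTop (y := -β) (by linarith)
  simpa using (h.const_mul B).const_add A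

theorem tendsto_powAffine_zero (hp : p < 0) (hβ : β < 0) :
    Tendsto (powAffine β p A B) atTop (𝓝 0) := by
  have h : Tendsto (fun t : ℝ => t ^ p) atTop (𝓝 0) := by
    simpa using tendsto_rpow_neg_atTop (y := -p) (by linarith)
  rw [← zero_mul A]
  exact h.mul (tendsto_affine_rpow hβ)

theorem eventually_powAffine_pos (hβ : β < 0) (hA : 0 < A) :
    ∀ᶠ t in atTop, 0 < powAffine β p A B t := by
  filter_upwards [(tendsto_affine_rpow (B := B) hβ).eventually_const_lt hA,
    eventually_gt_atTop 0] with t hpos ht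
  exact mul_pos (rpow_pos_of_pos ht p) hpos

end PowAffine

def scaleFactor (ℓ H β t : ℝ) : ℝ :=
  t ^ (ℓ / 2) * exp (H * t ^ β)

section ScaleFactor

variable {ℓ H β t : ℝ}

theorem scaleFactor_pos (ht : 0 < t) : 0 < scaleFactor ℓ H β t :=
  mul_pos (rpow_pos_of_pos ht _) (exp_pos _)

theorem hasDerivAt_scaleFactor (ht : 0 < t) :
    HasDerivAt (scaleFactor ℓ H β)
      (scaleFactor ℓ H β t * powAffine β (-1) (ℓ / 2) (H * β) t) t := by
  have hexp := ((hasDerivAt_rpow_const (p := β) (Or.inl ht.ne')).const_mul H).exp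
  refine ((hasDerivAt_rpow_const (p := ℓ / 2) (Or.inl ht.ne')).mul hexp).congr_deriv ?_
  have hsplit : t ^ (ℓ / 2 - 1) = t ^ (ℓ / 2) * t ^ (-1 : ℝ) := by
    rw [← rpow_add ht]
    ring_nf
  have hsplit' : t ^ (β - 1) = t ^ (-1 : ℝ) * t ^ β := by
    rw [← rpow_add ht]
    ring_nf
  simp only [scaleFactor, powAffine, hsplit, hsplit']
  ring

theorem eventually_deriv_scaleFactor_pos (hβ : β < 0) (hℓ : 0 < ℓ) :
    ∀ᶠ t in atTop, 0 < deriv (scaleFactor ℓ H β) t := by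
  filter_upwards [eventually_powAffine_pos (p := -1) (B := H * β) hβ (half_pos hℓ),
    eventually_gt_atTop 0] with t hu ht
  rw [(hasDerivAt_scaleFactor ht).deriv]
  exact mul_pos (scaleFactor_pos ht) hu

theorem curvedMass_scaleFactor_eqOn (n m : ℝ) :
    EqOn (curvedMass n m (scaleFactor ℓ H β))
      (fun t => m ^ 2 - n ^ 2 / 4 * powAffine β (-1) (ℓ / 2) (H * β) t ^ 2
        - n / 2 * powAffine β (-2) (-(ℓ / 2)) ((β - 1) * (H * β)) t) (Ioi 0) := by
  intro t ht
  rw [curvedMass_eqOn n m isOpen_Ioi (fun _ hx => hasDerivAt_scaleFactor hx)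
    (fun _ hx => (scaleFactor_pos hx).ne') (fun _ hx => hasDerivAt_powAffine hx) ht]
  norm_num only [powAffine, neg_one_mul, neg_add_eq_sub]

theorem eventually_curvedMass_scaleFactor_pos (n : ℝ) {m : ℝ} (hm : 0 < m) (hβ : β < 0) :
    ∀ᶠ t in atTop, 0 < curvedMass n m (scaleFactor ℓ H β) t := by
  have hu := tendsto_powAffine_zero (A := ℓ / 2) (B := H * β) (by norm_num : (-1 : ℝ) < 0) hβ
  have hv := tendsto_powAffine_zero (A := -(ℓ / 2)) (B := (β - 1) * (H * β))
    (by norm_num : (-2 : ℝ) < 0) hβ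
  have hlim := ((hu.pow 2).const_mul (n ^ 2 / 4)).const_sub (m ^ 2) |>.sub (hv.const_mul (n / 2))
  simp only [ne_eq, OfNat.ofNat_ne_zero, not_false_eq_true, zero_pow, mul_zero, sub_zero] at hlim
  filter_upwards [hlim.eventually_const_lt (pow_pos hm 2), eventually_gt_atTop 0] with t hc ht
  rwa [curvedMass_scaleFactor_eqOn n m ht]

theorem deriv_curvedMass_scaleFactor (n m : ℝ) (ht : 0 < t) :
    deriv (curvedMass n m (scaleFactor ℓ H β)) t = t ^ (-3 : ℝ) *
      (-(n ^ 2 / 2) * ((ℓ / 2 + H * β * t ^ β) * (-(ℓ / 2) + (β - 1) * (H * β) * t ^ β))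
        - n / 2 * (ℓ + (β - 2) * ((β - 1) * (H * β)) * t ^ β)) := by
  rw [deriv_curvedMass n m isOpen_Ioi (fun _ hx => hasDerivAt_scaleFactor hx)
    (fun _ hx => (scaleFactor_pos hx).ne') (fun _ hx => hasDerivAt_powAffine hx)
    (fun _ hx => hasDerivAt_powAffine hx) ht]
  have hsplit : t ^ (-1 : ℝ) * t ^ (-1 - 1 : ℝ) = t ^ (-3 : ℝ) := by
    rw [← rpow_add ht]
    norm_num
  simp only [powAffine]
  norm_num only at hsplit ⊢
  linear_combination (-(n ^ 2 / 2) * ((ℓ / 2 + H * β * t ^ β) *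
    (-(ℓ / 2) + (β - 1) * (H * β) * t ^ β))) * hsplit

theorem eventually_deriv_curvedMass_scaleFactor_neg {n : ℝ} (m : ℝ) (hn : 0 < n) (hβ : β < 0)
    (hℓ : 0 < ℓ) (hnℓ : n * ℓ < 4) :
    ∀ᶠ t in atTop, deriv (curvedMass n m (scaleFactor ℓ H β)) t < 0 := by
  have h₁ := tendsto_affine_rpow (A := ℓ / 2) (B := H * β) hβ
  have h₂ := tendsto_affine_rpow (A := -(ℓ / 2)) (B := (β - 1) * (H * β)) hβ
  have h₃ := tendsto_affine_rpow (A := ℓ) (B := (β - 2) * ((β - 1) * (H * β))) hβ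
  have hlim := ((h₁.mul h₂).const_mul (-(n ^ 2 / 2))).sub (h₃.const_mul (n / 2))
  have hneg : -(n ^ 2 / 2) * (ℓ / 2 * -(ℓ / 2)) - n / 2 * ℓ < 0 := by
    rw [show -(n ^ 2 / 2) * (ℓ / 2 * -(ℓ / 2)) - n / 2 * ℓ = n * ℓ * (n * ℓ - 4) / 8 by ring]
    exact div_neg_of_neg_of_pos (mul_neg_of_pos_of_neg (by positivity) (by linarith)) (by norm_num)
  filter_upwards [hlim.eventually_lt_const hneg, eventually_gt_atTop 0] with t hG ht
  rw [deriv_curvedMass_scaleFactor n m ht]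
  exact mul_neg_of_pos_of_neg (rpow_pos_of_pos ht _) hG

end ScaleFactor

theorem stmt_18_general (n : ℕ) (m H β ℓ : ℝ) (hm : 0 < m) (hβ : β < 0)
    (hℓ : 0 < ℓ) (hℓ' : ℓ < 4 / (n : ℝ))
    (a c : ℝ → ℝ) (ha : a = fun t => t ^ (ℓ / 2) * Real.exp (H * t ^ β))
    (hc : c = fun t => m ^ 2
      + ((n : ℝ) / 2 - (n : ℝ) ^ 2 / 4) * (deriv a t / a t) ^ 2
      - ((n : ℝ) / 2) * (deriv (deriv a) t / a t)) :
    ∃ t₀ : ℝ, 0 < t₀ ∧ ∀ t : ℝ, t₀ ≤ t →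
      0 < deriv a t ∧ 0 < c t ∧ deriv c t ≤ 0 := by
  have hn₀ : (0 : ℝ) < n := (div_pos_iff_of_pos_left four_pos).mp (hℓ.trans hℓ')
  have hnℓ : n * ℓ < 4 := by rwa [lt_div_iff₀ hn₀, mul_comm] at hℓ'
  subst ha hc
  obtain ⟨t₀, ht₀⟩ := ((eventually_deriv_scaleFactor_pos (H := H) hβ hℓ).and
    ((eventually_curvedMass_scaleFactor_pos n hm hβ).and
      (eventually_deriv_curvedMass_scaleFactor_neg m hn₀ hβ hℓ hnℓ))).exists_forall_of_atTop
  refine ⟨max t₀ 1, by positivity, fun t ht => ?_⟩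
  obtain ⟨hda, hc, hdc⟩ := ht₀ t (le_of_max_le_left ht)
  exact ⟨hda, hc, hdc.le⟩

/-- for the scale factor `a(t) = t^{ℓ/2} exp(H t^β)` with `β < 0` and
`0 < ℓ < 4/n`, eventually `ȧ > 0`, the curved mass is positive, and its derivative is
non-positive. -/
theorem stmt_18 (n : ℕ) (hn : 1 ≤ n) (m H β ℓ : ℝ) (hm : 0 < m) (hβ : β < 0)
    (hℓ : 0 < ℓ) (hℓ' : ℓ < 4 / (n : ℝ))
    (a c : ℝ → ℝ) (ha : a = fun t => t ^ (ℓ / 2) * Real.exp (H * t ^ β))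
    (hc : c = fun t => m ^ 2
      + ((n : ℝ) / 2 - (n : ℝ) ^ 2 / 4) * (deriv a t / a t) ^ 2
      - ((n : ℝ) / 2) * (deriv (deriv a) t / a t)) :
    ∃ t₀ : ℝ, 0 < t₀ ∧ ∀ t : ℝ, t₀ ≤ t →
      0 < deriv a t ∧ 0 < c t ∧ deriv c t ≤ 0 :=
  stmt_18_general n m H β ℓ hm hβ hℓ hℓ' a c ha hc
end
end
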